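/- Let $\Lambda$ be the 1-periodic extension of the hat function with $\Lambda(0) = \Lambda(1) = -1$ and $\Lambda(1/2) = 1$ (piecewise linear in between), and let $m:\mathbb{R}\to\mathbb{R}$ be Lipschitz. For $N \in \mathbb{N}$, define $\mathcal{S}^{1/N}(\bar u) = m(\bar u) + \Lambda(N\bar u)$, and let $\mu^{1/N}$ be the law of $(\mathcal{S}^{1/N}(\bar u), \bar u)$ with $\bar u \sim \mathcal{U}([0,1])$. Let $\mu$ be the uniform probability measure on the set $\mathcal{I}(m) = \{(u,\bar u) \in \mathbb{R}\times[0,1] : u \in [m(\bar u)-1, m(\bar u)+1]\}$. Then $W_1(\mu^{1/N}, \mu) = O(1/N)$, and in particular $W_1(\mu^{1/N}, \mu) \to 0$ as $N \to \infty$. -/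

import Mathlib

open MeasureTheory Filter Set
open scoped NNReal ENNReal Topology

/-- The 1-periodic extension of the hat function with `Λ 0 = Λ 1 = -1` and
`Λ (1/2) = 1`, piecewise linear in between. -/
noncomputable def hatΛ (x : ℝ) : ℝ := 1 - 4 * |Int.fract x - 1 / 2|

/-- The 1-Wasserstein distance, via couplings. -/
noncomputable def W1 {X : Type*} [MeasurableSpace X] [PseudoEMetricSpace X]
    (μ ν : Measure X) : ℝ≥0∞ :=
  ⨅ (π : Measure (X × X)) (_ : π.map Prod.fst = μ ∧ π.map Prod.snd = ν),
    ∫⁻ q, edist q.1 q.2 ∂π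

/-- The law of `(S^{1/N}(ū), ū)` where `S^{1/N}(ū) = m(ū) + Λ(N ū)` and
`ū ~ U([0,1])`. -/
noncomputable def graphLaw (m : ℝ → ℝ) (N : ℕ) : Measure (ℝ × ℝ) :=
  Measure.map (fun x => (m x + hatΛ ((N : ℝ) * x), x)) (volume.restrict (Icc (0 : ℝ) 1))

/-- The uniform probability measure on
`I(m) = {(u, ū) : ū ∈ [0,1], u ∈ [m(ū)-1, m(ū)+1]}` (a set of area 2). -/
noncomputable def limitLaw (m : ℝ → ℝ) : Measure (ℝ × ℝ) :=
  (2 : ℝ≥0∞)⁻¹ • volume.restrict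
    {q : ℝ × ℝ | q.2 ∈ Icc (0 : ℝ) 1 ∧ q.1 ∈ Icc (m q.2 - 1) (m q.2 + 1)}

lemma measurable_hatΛ : Measurable hatΛ :=
  measurable_const.sub (((measurable_fract.sub measurable_const).abs).const_mul 4)

lemma hatΛ_int_add (k : ℤ) (t : ℝ) : hatΛ ((k : ℝ) + t) = hatΛ t := by
  simp [hatΛ, Int.fract_intCast_add]

lemma hatΛ_nat_add (k : ℕ) (t : ℝ) : hatΛ ((k : ℝ) + t) = hatΛ t := by
  simpa using hatΛ_int_add (k : ℤ) t

lemma map_mul_add (a b : ℝ) (ha : a ≠ 0) :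
    Measure.map (fun x => a * x + b) (volume : Measure ℝ)
      = ENNReal.ofReal |a⁻¹| • volume := by
  have h : (fun x : ℝ => a * x + b) = (fun y : ℝ => y + b) ∘ (fun x : ℝ => a * x) := rfl
  rw [h, ← Measure.map_map (measurable_add_const b) (measurable_const_mul a),
    Real.map_volume_mul_left ha, Measure.map_smul, map_add_right_eq_self]

lemma hatΛ_eq_left {t : ℝ} (ht : t ∈ Ico (0:ℝ) (1/2)) : hatΛ t = 4 * t + (-1) := by
  have h1 : Int.fract t = t := Int.fract_eq_self.2 ⟨ht.1, by linarith [ht.2]⟩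
  rw [hatΛ, h1, abs_of_nonpos (by linarith [ht.2])]
  ring

lemma hatΛ_eq_right {t : ℝ} (ht : t ∈ Icc (1/2 : ℝ) 1) : hatΛ t = -4 * t + 3 := by
  rcases eq_or_lt_of_le ht.2 with h1 | h1
  · rw [h1, hatΛ, Int.fract_one, abs_of_nonpos (by norm_num)]
    norm_num
  · have h2 : Int.fract t = t := Int.fract_eq_self.2 ⟨by linarith [ht.1], h1⟩
    rw [hatΛ, h2, abs_of_nonneg (by linarith [ht.1])]
    ring

lemma map_hatΛ :
    Measure.map hatΛ (volume.restrict (Icc (0:ℝ) 1))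
      = (2 : ℝ≥0∞)⁻¹ • volume.restrict (Icc (-1:ℝ) 1) := by
  have hdisj : Disjoint (Ico (0:ℝ) (1/2)) (Icc (1/2:ℝ) 1) := by
    rw [Set.disjoint_left]
    rintro x ⟨_, h2⟩ ⟨h3, _⟩
    exact absurd h3 (not_le.2 h2)
  have hsplit : volume.restrict (Icc (0:ℝ) 1)
      = volume.restrict (Ico (0:ℝ) (1/2)) + volume.restrict (Icc (1/2:ℝ) 1) := by
    rw [← Measure.restrict_union hdisj measurableSet_Icc,
      Set.Ico_union_Icc_eq_Icc (by norm_num) (by norm_num)]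
  have e1 : Measure.map hatΛ (volume.restrict (Ico (0:ℝ) (1/2)))
      = Measure.map (fun t : ℝ => 4 * t + (-1)) (volume.restrict (Ico (0:ℝ) (1/2))) := by
    apply Measure.map_congr
    filter_upwards [ae_restrict_mem measurableSet_Ico] with t ht using hatΛ_eq_left ht
  have e1' : Measure.map hatΛ (volume.restrict (Icc (1/2:ℝ) 1))
      = Measure.map (fun t : ℝ => -4 * t + 3) (volume.restrict (Icc (1/2:ℝ) 1)) := by
    apply Measure.map_congr
    filter_upwards [ae_restrict_mem measurableSet_Icc] with t ht using hatΛ_eq_right ht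
  have p1 : Ico (0:ℝ) (1/2) = (fun t : ℝ => 4 * t + (-1)) ⁻¹' Ico (-1 : ℝ) 1 := by
    ext t
    simp only [mem_preimage, mem_Ico]
    constructor
    · rintro ⟨h1, h2⟩; constructor <;> linarith
    · rintro ⟨h1, h2⟩; constructor <;> linarith
  have p2 : Icc (1/2:ℝ) 1 = (fun t : ℝ => -4 * t + 3) ⁻¹' Icc (-1 : ℝ) 1 := by
    ext t
    simp only [mem_preimage, mem_Icc]
    constructor
    · rintro ⟨h1, h2⟩; constructor <;> linarith
    · rintro ⟨h1, h2⟩; constructor <;> linarith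
  have m1 : Measurable (fun t : ℝ => 4 * t + (-1)) := by fun_prop
  have m2 : Measurable (fun t : ℝ => -4 * t + 3) := by fun_prop
  have e2 : Measure.map (fun t : ℝ => 4 * t + (-1)) (volume.restrict (Ico (0:ℝ) (1/2)))
      = ENNReal.ofReal (4⁻¹ : ℝ) • volume.restrict (Ico (-1:ℝ) 1) := by
    rw [p1, ← Measure.restrict_map m1 measurableSet_Ico, map_mul_add 4 (-1) (by norm_num),
      Measure.restrict_smul]
    congr 2
    rw [abs_of_nonneg] <;> norm_num
  have e3 : Measure.map (fun t : ℝ => -4 * t + 3) (volume.restrict (Icc (1/2:ℝ) 1))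
      = ENNReal.ofReal (4⁻¹ : ℝ) • volume.restrict (Icc (-1:ℝ) 1) := by
    rw [p2, ← Measure.restrict_map m2 measurableSet_Icc, map_mul_add (-4) 3 (by norm_num),
      Measure.restrict_smul]
    congr 1
    rw [abs_of_nonpos (by norm_num)]
    norm_num
  rw [hsplit, Measure.map_add _ _ measurable_hatΛ, e1, e1', e2, e3,
    Measure.restrict_congr_set Ico_ae_eq_Icc, ← add_smul]
  congr 1
  rw [← ENNReal.ofReal_add (by norm_num) (by norm_num)]
  rw [show (4⁻¹ + 4⁻¹ : ℝ) = 2⁻¹ by norm_num]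
  rw [ENNReal.ofReal_inv_of_pos (by norm_num : (0:ℝ) < 2)]
  norm_num

lemma map_finset_sum_meas {α β : Type*} [MeasurableSpace α] [MeasurableSpace β] {f : α → β}
    (hf : Measurable f) {ι : Type*} (s : Finset ι) (μ : ι → Measure α) :
    (∑ k ∈ s, μ k).map f = ∑ k ∈ s, (μ k).map f := by
  ext A hA
  rw [Measure.map_apply hf hA, Measure.finset_sum_apply, Measure.finset_sum_apply]
  exact Finset.sum_congr rfl fun k _ => (Measure.map_apply hf hA).symm

lemma sum_prod' {α β : Type*} [MeasurableSpace α] [MeasurableSpace β]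
    {ι : Type*} (s : Finset ι) (μ : ι → Measure α) (ν : Measure β) [SFinite ν] :
    (∑ k ∈ s, μ k).prod ν = ∑ k ∈ s, (μ k).prod ν := by
  ext A hA
  rw [Measure.prod_apply hA, Measure.finset_sum_apply, lintegral_finset_sum_measure]
  exact Finset.sum_congr rfl fun k _ => (Measure.prod_apply hA).symm

lemma smul_prod' {α β : Type*} [MeasurableSpace α] [MeasurableSpace β]
    (c : ℝ≥0∞) (μ : Measure α) (ν : Measure β) [SFinite ν] :
    (c • μ).prod ν = c • (μ.prod ν) := by
  ext A hA
  rw [Measure.prod_apply hA, lintegral_smul_measure, Measure.smul_apply,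
    Measure.prod_apply hA, smul_eq_mul]

lemma prod_smul' {α β : Type*} [MeasurableSpace α] [MeasurableSpace β]
    (c : ℝ≥0∞) (μ : Measure α) (ν : Measure β) [SFinite ν] :
    μ.prod (c • ν) = c • (μ.prod ν) := by
  ext A hA
  rw [Measure.prod_apply hA, Measure.smul_apply, Measure.prod_apply hA, smul_eq_mul,
    ← lintegral_const_mul c (measurable_measure_prodMk_left hA)]
  simp only [Measure.smul_apply, smul_eq_mul]

lemma Ioc_partition (N : ℕ) (hN : 1 ≤ N) :
    ∑ k ∈ Finset.range N, (volume : Measure ℝ).restrict (Ioc ((k:ℝ)/N) (((k:ℝ)+1)/N))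
      = volume.restrict (Ioc (0:ℝ) 1) := by
  have hN0 : (0:ℝ) < N := by exact_mod_cast Nat.pos_of_ne_zero (by omega)
  have hU : (⋃ k ∈ Finset.range N, Ioc ((k:ℝ)/N) (((k:ℝ)+1)/N)) = Ioc (0:ℝ) 1 := by
    ext x
    simp only [Finset.mem_range, Set.mem_iUnion, Set.mem_Ioc, exists_prop]
    constructor
    · rintro ⟨k, hk, h1, h2⟩
      have hk' : (k:ℝ) + 1 ≤ N := by exact_mod_cast hk
      have h0 : (0:ℝ) ≤ (k:ℝ)/N := by positivity
      refine ⟨lt_of_le_of_lt h0 h1, h2.trans ?_⟩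
      rw [div_le_one hN0]; exact hk'
    · rintro ⟨h1, h2⟩
      have hx : 0 < (N:ℝ) * x := by positivity
      have hc1 : 1 ≤ ⌈(N:ℝ)*x⌉₊ := Nat.one_le_ceil_iff.2 hx
      have hcle : ⌈(N:ℝ)*x⌉₊ ≤ N := Nat.ceil_le.2 (by nlinarith)
      refine ⟨⌈(N:ℝ)*x⌉₊ - 1, by omega, ?_, ?_⟩
      · rw [div_lt_iff₀ hN0, Nat.cast_sub hc1]
        have := Nat.ceil_lt_add_one (le_of_lt hx)
        push_cast
        linarith [this]
      · rw [le_div_iff₀ hN0, Nat.cast_sub hc1]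
        have := Nat.le_ceil ((N:ℝ)*x)
        push_cast
        linarith [this]
  have hd : (↑(Finset.range N) : Set ℕ).PairwiseDisjoint
      (fun k : ℕ => Ioc ((k:ℝ)/N) (((k:ℝ)+1)/N)) := by
    intro i _ j _ hij
    rw [Function.onFun, Set.Ioc_disjoint_Ioc]
    rcases lt_or_gt_of_ne hij with h | h
    · refine le_trans (min_le_left _ _) (le_trans ?_ (le_max_right _ _))
      gcongr
      exact_mod_cast h
    · refine le_trans (min_le_right _ _) (le_trans ?_ (le_max_left _ _))
      gcongr
      exact_mod_cast h
  ext A hA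
  rw [Measure.finset_sum_apply, Measure.restrict_apply hA]
  simp_rw [Measure.restrict_apply hA]
  rw [← measure_biUnion_finset (hd.mono fun k => Set.inter_subset_right)
      (fun k _ => hA.inter measurableSet_Ioc)]
  congr 1
  rw [← Set.inter_iUnion₂, hU]

lemma Icc_partition (N : ℕ) (hN : 1 ≤ N) :
    ∑ k ∈ Finset.range N, (volume : Measure ℝ).restrict (Icc ((k:ℝ)/N) (((k:ℝ)+1)/N))
      = volume.restrict (Icc (0:ℝ) 1) := by
  rw [← Measure.restrict_congr_set Ioc_ae_eq_Icc, ← Ioc_partition N hN]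
  exact Finset.sum_congr rfl fun k _ => (Measure.restrict_congr_set Ioc_ae_eq_Icc).symm

lemma map_bk (N k : ℕ) (hN : 1 ≤ N) :
    Measure.map (fun t : ℝ => ((k:ℝ) + t)/(N:ℝ)) ((volume : Measure ℝ).restrict (Icc (0:ℝ) 1))
      = (N : ℝ≥0∞) • volume.restrict (Icc ((k:ℝ)/N) (((k:ℝ)+1)/N)) := by
  have hN0 : (0:ℝ) < N := by exact_mod_cast Nat.pos_of_ne_zero (by omega)
  have hfun : (fun t : ℝ => ((k:ℝ)+t)/(N:ℝ)) = fun t : ℝ => (N:ℝ)⁻¹ * t + (k:ℝ)/N := by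
    funext t; field_simp; ring
  have hmeas : Measurable (fun t : ℝ => (N:ℝ)⁻¹ * t + (k:ℝ)/N) := by fun_prop
  have hpre : Icc (0:ℝ) 1
      = (fun t : ℝ => (N:ℝ)⁻¹ * t + (k:ℝ)/N) ⁻¹' Icc ((k:ℝ)/N) (((k:ℝ)+1)/N) := by
    ext t
    simp only [mem_preimage, mem_Icc]
    have e : ((N:ℝ)⁻¹ * t + (k:ℝ)/N) * N = t + k := by field_simp
    rw [div_le_iff₀ hN0, le_div_iff₀ hN0, e]
    constructor
    · rintro ⟨h1, h2⟩
      constructor <;> linarith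
    · rintro ⟨h1, h2⟩
      constructor <;> linarith
  rw [hfun, hpre, ← Measure.restrict_map hmeas measurableSet_Icc,
    map_mul_add _ _ (by positivity), Measure.restrict_smul]
  congr 1
  rw [abs_of_nonneg (by positivity), inv_inv, ENNReal.ofReal_natCast]

lemma map_psi (m : ℝ → ℝ) (hmc : Continuous m) :
    Measure.map (fun p : ℝ × ℝ => (m p.1 + hatΛ p.2, p.1))
      (((volume : Measure ℝ).restrict (Icc (0:ℝ) 1)).prod
        ((volume : Measure ℝ).restrict (Icc (0:ℝ) 1)))
      = limitLaw m := by
  have hmm : Measurable m := hmc.measurable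
  set θ : ℝ × ℝ → ℝ × ℝ := fun q => (m q.1 + q.2, q.1) with hθdef
  have hθmeas : Measurable θ :=
    ((hmm.comp measurable_fst).add measurable_snd).prodMk measurable_fst
  have hcomp : (fun p : ℝ × ℝ => (m p.1 + hatΛ p.2, p.1)) = θ ∘ (Prod.map id hatΛ) := rfl
  have hPmeas : Measurable (Prod.map (id : ℝ → ℝ) hatΛ) := measurable_id.prodMap measurable_hatΛ
  set S : Set (ℝ × ℝ) := {q : ℝ × ℝ | q.2 ∈ Icc (0 : ℝ) 1 ∧ q.1 ∈ Icc (m q.2 - 1) (m q.2 + 1)}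
    with hSdef
  have hS : MeasurableSet S := by
    have hSeq : S = (Prod.snd ⁻¹' Icc (0:ℝ) 1) ∩
        ({q : ℝ × ℝ | m q.2 - 1 ≤ q.1} ∩ {q : ℝ × ℝ | q.1 ≤ m q.2 + 1}) := by
      ext q; simp only [hSdef, mem_setOf_eq, mem_inter_iff, mem_preimage, mem_Icc]
    rw [hSeq]
    exact (measurable_snd measurableSet_Icc).inter
      ((measurableSet_le ((hmm.comp measurable_snd).sub measurable_const) measurable_fst).inter
        (measurableSet_le measurable_fst ((hmm.comp measurable_snd).add measurable_const)))
  have hθpre : θ ⁻¹' S = Icc (0:ℝ) 1 ×ˢ Icc (-1:ℝ) 1 := by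
    ext p
    simp only [hSdef, mem_preimage, mem_setOf_eq, mem_prod, mem_Icc, hθdef]
    constructor
    · intro h
      exact ⟨h.1, by linarith [h.2.1, h.2.2], by linarith [h.2.1, h.2.2]⟩
    · intro h
      exact ⟨h.1, by linarith [h.2.1, h.2.2], by linarith [h.2.1, h.2.2]⟩
  have hθpres : MeasurePreserving θ (volume : Measure (ℝ × ℝ)) volume := by
    have hshear : MeasurePreserving (fun p : ℝ × ℝ => (p.1, m p.1 + p.2))
        ((volume : Measure ℝ).prod volume) ((volume : Measure ℝ).prod volume) :=
      MeasurePreserving.skew_product (MeasurePreserving.id _)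
        (by exact (hmm.comp measurable_fst).add measurable_snd)
        (ae_of_all _ fun a => map_add_left_eq_self volume (m a))
    have hswap : MeasurePreserving (Prod.swap : ℝ × ℝ → ℝ × ℝ)
        ((volume : Measure ℝ).prod volume) ((volume : Measure ℝ).prod volume) :=
      Measure.measurePreserving_swap
    have hcompθ : θ = Prod.swap ∘ (fun p : ℝ × ℝ => (p.1, m p.1 + p.2)) := rfl
    rw [hcompθ, Measure.volume_eq_prod]
    exact hswap.comp hshear
  rw [hcomp, ← Measure.map_map hθmeas hPmeas,
    ← Measure.map_prod_map _ _ measurable_id measurable_hatΛ, Measure.map_id, map_hatΛ,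
    prod_smul', Measure.map_smul]
  unfold limitLaw
  rw [← hSdef]
  congr 1
  rw [Measure.prod_restrict, ← Measure.volume_eq_prod, ← hθpre,
    ← Measure.restrict_map hθmeas hS, hθpres.map_eq]

/-- For Lipschitz `m`, the graph measures of the oscillatory
maps `S^{1/N}` converge in 1-Wasserstein distance to the uniform measure on
`I(m)`, at rate `O(1/N)`. -/
theorem wasserstein_convergence_of_oscillatory_graphs
    (m : ℝ → ℝ) (L : ℝ≥0) (hm : LipschitzWith L m) :
    (∃ C > 0, ∀ N : ℕ, 1 ≤ N →
        W1 (graphLaw m N) (limitLaw m) ≤ ENNReal.ofReal (C / N)) ∧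
      Tendsto (fun N : ℕ => W1 (graphLaw m N) (limitLaw m)) atTop (𝓝 0) := by
  have hmc : Continuous m := hm.continuous
  have hmm : Measurable m := hmc.measurable
  set C : ℝ := max (L : ℝ) 1 with hC
  have hCpos : (0:ℝ) < C := lt_of_lt_of_le one_pos (le_max_right _ _)
  have key : ∀ N : ℕ, 1 ≤ N →
      W1 (graphLaw m N) (limitLaw m) ≤ ENNReal.ofReal (C / N) := by
    intro N hN
    have hN0 : (0:ℝ) < N := by exact_mod_cast Nat.pos_of_ne_zero (by omega)
    have hNne : (N : ℝ≥0∞) ≠ 0 := by exact_mod_cast Nat.cast_ne_zero.2 (by omega)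
    have hNtop : (N : ℝ≥0∞) ≠ ⊤ := ENNReal.natCast_ne_top N
    set Leb : Measure ℝ := volume.restrict (Icc (0:ℝ) 1) with hLebdef
    have hLebuniv : Leb univ = 1 := by
      rw [hLebdef, Measure.restrict_apply_univ, Real.volume_Icc]
      norm_num
    set F : ℝ → ℝ × ℝ := fun x => (m x + hatΛ ((N : ℝ) * x), x) with hFdef
    have hF : Measurable F := by
      apply Measurable.prodMk
      · exact hmm.add (measurable_hatΛ.comp (measurable_const_mul _))
      · exact measurable_id
    set ψ : ℝ × ℝ → ℝ × ℝ := fun p => (m p.1 + hatΛ p.2, p.1) with hψdef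
    have hψ : Measurable ψ :=
      ((hmm.comp measurable_fst).add (measurable_hatΛ.comp measurable_snd)).prodMk
        measurable_fst
    set bk : ℕ → ℝ → ℝ := fun k t => ((k:ℝ) + t)/(N:ℝ) with hbkdef
    have hbk : ∀ k, Measurable (bk k) := fun k => by fun_prop
    set Φ : ℕ → ℝ × ℝ → (ℝ × ℝ) × (ℝ × ℝ) :=
      fun k p => (F (bk k p.2), ψ (bk k p.1, p.2)) with hΦdef
    have hΦ : ∀ k, Measurable (Φ k) := fun k =>
      ((hF.comp ((hbk k).comp measurable_snd))).prodMk
        (hψ.comp (((hbk k).comp measurable_fst).prodMk measurable_snd))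
    set π : Measure ((ℝ × ℝ) × (ℝ × ℝ)) :=
      (N : ℝ≥0∞)⁻¹ • ∑ k ∈ Finset.range N, (Leb.prod Leb).map (Φ k) with hπdef
    have hfst : π.map Prod.fst = graphLaw m N := by
      rw [hπdef, Measure.map_smul, map_finset_sum_meas measurable_fst]
      have hterm : ∀ k ∈ Finset.range N, ((Leb.prod Leb).map (Φ k)).map Prod.fst
          = (N : ℝ≥0∞) • Measure.map F
              (volume.restrict (Icc ((k:ℝ)/N) (((k:ℝ)+1)/N))) := by
        intro k _
        rw [Measure.map_map measurable_fst (hΦ k)]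
        have hc : ((Prod.fst : (ℝ×ℝ)×(ℝ×ℝ) → ℝ×ℝ) ∘ Φ k)
            = F ∘ (bk k) ∘ (Prod.snd : ℝ × ℝ → ℝ) := rfl
        rw [hc, ← Measure.map_map hF ((hbk k).comp measurable_snd),
          ← Measure.map_map (hbk k) measurable_snd, Measure.map_snd_prod, hLebuniv, one_smul,
          hLebdef, map_bk N k hN, Measure.map_smul]
      rw [Finset.sum_congr rfl hterm, ← Finset.smul_sum, ← map_finset_sum_meas hF,
        Icc_partition N hN, smul_smul, ENNReal.inv_mul_cancel hNne hNtop, one_smul]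
      rw [graphLaw, hFdef]
    have hsnd : π.map Prod.snd = limitLaw m := by
      rw [hπdef, Measure.map_smul, map_finset_sum_meas measurable_snd]
      have hterm : ∀ k ∈ Finset.range N, ((Leb.prod Leb).map (Φ k)).map Prod.snd
          = (N : ℝ≥0∞) • Measure.map ψ
              ((volume.restrict (Icc ((k:ℝ)/N) (((k:ℝ)+1)/N))).prod Leb) := by
        intro k _
        rw [Measure.map_map measurable_snd (hΦ k)]
        have hc : ((Prod.snd : (ℝ×ℝ)×(ℝ×ℝ) → ℝ×ℝ) ∘ Φ k)
            = ψ ∘ (Prod.map (bk k) (id : ℝ → ℝ)) := rfl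
        rw [hc, ← Measure.map_map hψ ((hbk k).prodMap measurable_id),
          ← Measure.map_prod_map _ _ (hbk k) measurable_id, Measure.map_id]
        rw [show Measure.map (bk k) Leb
            = (N : ℝ≥0∞) • volume.restrict (Icc ((k:ℝ)/N) (((k:ℝ)+1)/N)) from by
          rw [hLebdef]; exact map_bk N k hN]
        rw [smul_prod', Measure.map_smul]
      rw [Finset.sum_congr rfl hterm, ← Finset.smul_sum, smul_smul,
        ENNReal.inv_mul_cancel hNne hNtop, one_smul, ← map_finset_sum_meas hψ, ← sum_prod',
        Icc_partition N hN]
      rw [hψdef, hLebdef]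
      exact map_psi m hmc
    have hbound : ∀ k : ℕ, ∀ p : ℝ × ℝ, p ∈ Icc (0:ℝ) 1 ×ˢ Icc (0:ℝ) 1 →
        edist (Φ k p).1 (Φ k p).2 ≤ ENNReal.ofReal (C / N) := by
      intro k p hp
      obtain ⟨⟨hp1a, hp1b⟩, hp2a, hp2b⟩ := hp
      have hNx : (N:ℝ) * (bk k p.2) = (k:ℝ) + p.2 := by
        rw [hbkdef]; field_simp
      have hΛ : hatΛ ((N:ℝ) * (bk k p.2)) = hatΛ p.2 := by rw [hNx, hatΛ_nat_add]
      have hxu : |bk k p.2 - bk k p.1| ≤ 1/(N:ℝ) := by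
        have he : bk k p.2 - bk k p.1 = (p.2 - p.1)/N := by rw [hbkdef]; field_simp; ring
        rw [he, abs_div, abs_of_pos hN0]
        gcongr
        · exact abs_le.2 ⟨by linarith, by linarith⟩
      have hedist2 : edist (bk k p.2) (bk k p.1) ≤ ENNReal.ofReal (C / N) := by
        rw [edist_dist, Real.dist_eq]
        apply ENNReal.ofReal_le_ofReal
        calc |bk k p.2 - bk k p.1| ≤ 1/(N:ℝ) := hxu
          _ ≤ C/N := by gcongr; exact le_max_right _ _
      have hedist1 : edist (m (bk k p.2) + hatΛ ((N:ℝ) * bk k p.2))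
          (m (bk k p.1) + hatΛ p.2) ≤ ENNReal.ofReal (C / N) := by
        rw [hΛ, edist_dist, Real.dist_eq]
        apply ENNReal.ofReal_le_ofReal
        have he : m (bk k p.2) + hatΛ p.2 - (m (bk k p.1) + hatΛ p.2)
            = m (bk k p.2) - m (bk k p.1) := by ring
        rw [he]
        calc |m (bk k p.2) - m (bk k p.1)| = dist (m (bk k p.2)) (m (bk k p.1)) :=
              (Real.dist_eq _ _).symm
          _ ≤ L * dist (bk k p.2) (bk k p.1) := hm.dist_le_mul _ _
          _ = L * |bk k p.2 - bk k p.1| := by rw [Real.dist_eq]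
          _ ≤ L * (1/(N:ℝ)) := mul_le_mul_of_nonneg_left hxu L.coe_nonneg
          _ ≤ C/N := by rw [mul_one_div]; gcongr; exact le_max_left _ _
      calc edist (Φ k p).1 (Φ k p).2
          = max (edist (m (bk k p.2) + hatΛ ((N:ℝ) * bk k p.2)) (m (bk k p.1) + hatΛ p.2))
              (edist (bk k p.2) (bk k p.1)) := by
            rw [hΦdef, Prod.edist_eq]
        _ ≤ ENNReal.ofReal (C / N) := max_le hedist1 hedist2
    have hcost : ∫⁻ q, edist q.1 q.2 ∂π ≤ ENNReal.ofReal (C / N) := by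
      have hedistm : Measurable (fun q : (ℝ×ℝ)×(ℝ×ℝ) => edist q.1 q.2) := measurable_edist
      rw [hπdef, lintegral_smul_measure, lintegral_finset_sum_measure]
      have hk : ∀ k ∈ Finset.range N,
          ∫⁻ q, edist q.1 q.2 ∂((Leb.prod Leb).map (Φ k)) ≤ ENNReal.ofReal (C / N) := by
        intro k _
        rw [lintegral_map hedistm (hΦ k)]
        have hlam : Leb.prod Leb
            = (volume : Measure (ℝ×ℝ)).restrict (Icc (0:ℝ) 1 ×ˢ Icc (0:ℝ) 1) := by
          rw [hLebdef, Measure.prod_restrict, ← Measure.volume_eq_prod]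
        rw [hlam]
        calc ∫⁻ p in Icc (0:ℝ) 1 ×ˢ Icc (0:ℝ) 1, edist (Φ k p).1 (Φ k p).2 ∂volume
            ≤ ∫⁻ _ in Icc (0:ℝ) 1 ×ˢ Icc (0:ℝ) 1, ENNReal.ofReal (C / N) ∂volume := by
              apply lintegral_mono_ae
              filter_upwards [ae_restrict_mem (measurableSet_Icc.prod measurableSet_Icc)]
                with p hp using hbound k p hp
          _ = ENNReal.ofReal (C / N) := by
              rw [setLIntegral_const, Measure.volume_eq_prod, Measure.prod_prod,
                Real.volume_Icc]
              norm_num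
      calc (N : ℝ≥0∞)⁻¹ * ∑ k ∈ Finset.range N,
            ∫⁻ q, edist q.1 q.2 ∂((Leb.prod Leb).map (Φ k))
          ≤ (N : ℝ≥0∞)⁻¹ * ∑ _k ∈ Finset.range N, ENNReal.ofReal (C / N) := by
            exact mul_le_mul_right (Finset.sum_le_sum hk) _
        _ = ENNReal.ofReal (C / N) := by
            rw [Finset.sum_const, Finset.card_range, nsmul_eq_mul, ← mul_assoc,
              ENNReal.inv_mul_cancel hNne hNtop, one_mul]
    calc W1 (graphLaw m N) (limitLaw m) ≤ ∫⁻ q, edist q.1 q.2 ∂π := by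
          apply iInf₂_le π ⟨hfst, hsnd⟩
      _ ≤ ENNReal.ofReal (C / N) := hcost
  refine ⟨⟨C, hCpos, key⟩, ?_⟩
  have h0 : Tendsto (fun N : ℕ => ENNReal.ofReal (C / N)) atTop (𝓝 0) := by
    have := ENNReal.tendsto_ofReal (tendsto_const_div_atTop_nhds_zero_nat C)
    simpa using this
  apply tendsto_of_tendsto_of_tendsto_of_le_of_le' tendsto_const_nhds h0
  · exact Filter.Eventually.of_forall fun n => zero_le
  · exact (eventually_ge_atTop 1).mono key
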